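/- arXiv:2201.04181 — 4 statements merged into one kernel-verified Lean document; each statement's English description precedes it below -/
import Mathlib

section
/- Let n ≥ 2, 1 ≤ k ≤ n-1, 0 ≤ d ≤ k, and let i, j ∈ [n] with i ≤ k < j. Then the number of permutations α of [n] with exactly d fixed points among the first k points and α(i) = j equals c(n-1, k-1, d). -/
/-!
Left multiplication by the transposition `(i j)` maps the permutations with `α i = j` bijectively
onto those fixing `i`. As `j` lies outside the first `k` points, the fixed points of `α` there are
those of `(i j) * α` other than `i`. A permutation fixing `i` is a permutation of the other `n - 1`
points, relabelled by `Fin.succAbove i`, which sends the first `k - 1` points of `Fin (n - 1)` onto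
the first `k` points of `Fin n` other than `i`.
-/

/-- `c n k d` : number of permutations of `{1,...,n}` (modeled as `Fin n`)
with exactly `d` fixed points among the first `k` points. -/
noncomputable def c (n k d : ℕ) : ℕ :=
  Nat.card {α : Equiv.Perm (Fin n) //
    (Finset.univ.filter (fun i : Fin n => (i : ℕ) < k ∧ α i = i)).card = d}

/-- `p n k d = c n k d / n!`, the probability that a uniformly random permutation
of `[n]` has exactly `d` fixed points among the first `k` points. -/
noncomputable def p (n k d : ℕ) : ℝ := (c n k d : ℝ) / (Nat.factorial n)

/-- `f n k d = c (n-1) k d / c n k d`, the conditional probability that the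
`(k+1)`-st point is fixed given exactly `d` fixed points among the first `k` points. -/
noncomputable def f (n k d : ℕ) : ℝ := (c (n - 1) k d : ℝ) / (c n k d)

open Equiv Finset

namespace Equiv.Perm

variable {α β : Type*} [DecidableEq α]

theorem swap_mul_apply_eq_self_iff {τ : Perm α} {i j : α} (hτ : τ i = i) (hij : i ≠ j)
    (x : α) :
    (swap i j * τ) x = x ↔ τ x = x ∧ x ≠ i ∧ x ≠ j := by
  have hτx : τ x = i ↔ x = i := by rw [← hτ, τ.injective.eq_iff, hτ]
  rw [mul_apply, swap_apply_def]
  grind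

theorem filter_swap_mul_apply_eq_self {τ : Perm α} {i j : α} (hτ : τ i = i) (hij : i ≠ j)
    {S : Finset α} (hjS : j ∉ S) :
    S.filter (fun x => (swap i j * τ) x = x) = (S.erase i).filter fun x => τ x = x := by
  ext x
  simp only [mem_filter, mem_erase, swap_mul_apply_eq_self_iff hτ hij]
  grind

theorem card_filter_swap_mul_apply_eq_self [Fintype α] {i j : α} (hij : i ≠ j) {S : Finset α}
    (hjS : j ∉ S) (d : ℕ) :
    Nat.card {σ : Perm α // #(S.filter fun x => σ x = x) = d ∧ σ i = j} =
      Nat.card {τ : Perm α // τ i = i ∧ #((S.erase i).filter fun x => τ x = x) = d} := by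
  refine Nat.card_congr ((Equiv.mulLeft (swap i j)).subtypeEquiv fun τ => ?_).symm
  have hi : (swap i j * τ) i = j ↔ τ i = i := by
    rw [mul_apply, swap_apply_eq_iff, swap_apply_right]
  show _ ↔ #(S.filter fun x => (swap i j * τ) x = x) = d ∧ (swap i j * τ) i = j
  rw [hi]
  exact (and_congr_right fun hτ => by rw [filter_swap_mul_apply_eq_self hτ hij hjS]).trans
    and_comm

def equivFixing {a : α} (e : β ≃ {x // x ≠ a}) : Perm β ≃ {σ : Perm α // σ a = a} :=
  e.permCongr.trans <| (Perm.subtypeEquivSubtypePerm _).trans <| subtypeEquivRight fun _ => by simp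

theorem equivFixing_apply_coe {a : α} (e : β ≃ {x // x ≠ a}) (τ : Perm β) (y : β) :
    (equivFixing e τ : Perm α) (e y) = e (τ y) := by
  simp [equivFixing, Perm.subtypeEquivSubtypePerm, ofSubtype_apply_coe]

theorem filter_map_equivFixing_apply_eq_self [DecidableEq β] {a : α} (e : β ≃ {x // x ≠ a})
    (τ : Perm β) (T : Finset β) :
    (T.map (e.toEmbedding.trans (.subtype _))).filter
        (fun x => (equivFixing e τ : Perm α) x = x) =
      (T.filter fun y => τ y = y).map (e.toEmbedding.trans (.subtype _)) := by
  rw [filter_map]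
  congr 1
  refine filter_congr fun y _ => ?_
  simp [equivFixing_apply_coe, Subtype.coe_inj]

theorem card_fixing_filter_map_apply_eq_self [DecidableEq β] {a : α} (e : β ≃ {x // x ≠ a})
    (T : Finset β) (d : ℕ) :
    Nat.card {σ : Perm α // σ a = a ∧
        #((T.map (e.toEmbedding.trans (.subtype _))).filter fun x => σ x = x) = d} =
      Nat.card {τ : Perm β // #(T.filter fun y => τ y = y) = d} := by
  refine Nat.card_congr (((equivFixing e).subtypeEquiv fun τ => ?_).trans
    (subtypeSubtypeEquivSubtypeInter _ _)).symm
  rw [filter_map_equivFixing_apply_eq_self, card_map]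

end Equiv.Perm

theorem Fin.val_succAbove_lt_iff {m k : ℕ} {p : Fin (m + 1)} (hp : (p : ℕ) < k) (y : Fin m) :
    (p.succAbove y : ℕ) < k ↔ (y : ℕ) < k - 1 := by
  rw [Fin.succAbove]
  split_ifs with h
  · have : (y : ℕ) < p := h
    simp only [Fin.val_castSucc]
    omega
  · have : (p : ℕ) ≤ y := not_lt.mp h
    simp only [Fin.val_succ]
    omega

theorem Fin.filter_val_lt_erase {m k : ℕ} {i : Fin (m + 1)} (hi : (i : ℕ) < k) :
    (univ.filter fun x : Fin (m + 1) => (x : ℕ) < k).erase i =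
      (univ.filter fun y : Fin m => (y : ℕ) < k - 1).map
        ((finSuccAboveEquiv i).toEmbedding.trans (.subtype _)) := by
  ext x
  simp only [mem_erase, mem_filter, mem_univ, true_and, mem_map, Function.Embedding.trans_apply,
    Equiv.coe_toEmbedding, Function.Embedding.subtype_apply, finSuccAboveEquiv_apply]
  constructor
  · rintro ⟨hxi, hxk⟩
    obtain ⟨y, rfl⟩ := Fin.exists_succAbove_eq hxi
    exact ⟨y, (Fin.val_succAbove_lt_iff hi y).mp hxk, rfl⟩
  · rintro ⟨y, hy, rfl⟩
    exact ⟨Fin.succAbove_ne i y, (Fin.val_succAbove_lt_iff hi y).mpr hy⟩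

theorem stmt7_general (n k d : ℕ) (i j : Fin n) (hi : (i : ℕ) < k) (hj : k ≤ (j : ℕ)) :
    Nat.card {α : Equiv.Perm (Fin n) //
        (Finset.univ.filter (fun x : Fin n => (x : ℕ) < k ∧ α x = x)).card = d ∧ α i = j}
      = c (n - 1) (k - 1) d := by
  obtain ⟨m, rfl⟩ : ∃ m, n = m + 1 := ⟨n - 1, by omega⟩
  have hij : i ≠ j := fun h => by rw [h] at hi; omega
  have hjS : j ∉ univ.filter fun x : Fin (m + 1) => (x : ℕ) < k := by simpa using hj
  simp only [c, ← filter_filter]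
  rw [Perm.card_filter_swap_mul_apply_eq_self hij hjS, Fin.filter_val_lt_erase hi,
    Perm.card_fixing_filter_map_apply_eq_self]
  rfl

theorem stmt7 (n k d : ℕ) (hn : 2 ≤ n) (hk1 : 1 ≤ k) (hk : k ≤ n - 1)
    (hd : d ≤ k) (i j : Fin n) (hi : (i : ℕ) < k) (hj : k ≤ (j : ℕ)) :
    Nat.card {α : Equiv.Perm (Fin n) //
        (Finset.univ.filter (fun x : Fin n => (x : ℕ) < k ∧ α x = x)).card = d ∧ α i = j}
      = c (n - 1) (k - 1) d :=
  stmt7_general n k d i j hi hj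
end

section
/- For 0 ≤ k < n, p(n,k+1,0) = p(n,k,0) - (1/n)·p(n-1,k,0). -/
namespace Equiv.Perm

variable {α β : Type*}

def FixedPointFreeOn (P : α → Prop) (σ : Perm α) : Prop := ∀ x, P x → σ x ≠ x

theorem card_fixedPointFreeOn_eq_card_insert_add [Finite α] (P : α → Prop) (a : α) :
    Nat.card {σ : Perm α // FixedPointFreeOn P σ} =
      Nat.card {σ : Perm α // FixedPointFreeOn (fun x => P x ∨ x = a) σ} +
        Nat.card {σ : Perm α // FixedPointFreeOn P σ ∧ σ a = a} := by
  classical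
  have hsplit : ∀ σ : Perm α, FixedPointFreeOn P σ ↔
      FixedPointFreeOn (fun x => P x ∨ x = a) σ ∨ (FixedPointFreeOn P σ ∧ σ a = a) := by
    intro σ
    by_cases ha : σ a = a
    · simp [FixedPointFreeOn, ha]
    · simp [FixedPointFreeOn, ha, or_imp, forall_and]
  have hdisj : _root_.Disjoint (FixedPointFreeOn (fun x => P x ∨ x = a))
      (fun σ => FixedPointFreeOn P σ ∧ σ a = a) := by
    intro r h₁ h₂ σ hr
    exact h₁ σ hr a (Or.inr rfl) (h₂ σ hr).2
  rw [← Nat.card_sum]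
  exact Nat.card_congr ((subtypeEquivRight hsplit).trans (subtypeOrEquiv _ _ hdisj))

theorem card_fixedPointFreeOn_and_fixed_eq_card_subtype [Finite α] (P : α → Prop) {a : α}
    (ha : ¬ P a) :
    Nat.card {σ : Perm α // FixedPointFreeOn P σ ∧ σ a = a} =
      Nat.card {τ : Perm {x // x ≠ a} // FixedPointFreeOn (fun x : {x // x ≠ a} => P x) τ} := by
  classical
  symm
  refine Nat.card_congr ((Perm.subtypeEquivSubtypePerm (· ≠ a)).subtypeEquiv
    (q := fun σ => FixedPointFreeOn P σ.1) ?_ |>.trans ?_)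
  · intro τ
    simp only [FixedPointFreeOn, Subtype.forall]
    constructor
    · intro h x hx
      have hxa : x ≠ a := fun h => ha (h ▸ hx)
      rw [subtypeEquivSubtypePerm_apply_of_mem (p := (· ≠ a)) _ hxa]
      exact fun hfix => h x hxa hx (Subtype.ext hfix)
    · intro h x hxa hx hfix
      apply h x hx
      rw [subtypeEquivSubtypePerm_apply_of_mem (p := (· ≠ a)) _ hxa, hfix]
  · refine (subtypeSubtypeEquivSubtypeInter _ _).trans (subtypeEquivRight fun σ => ?_)
    simp only [not_not, forall_eq, and_comm]

theorem card_fixedPointFreeOn_congr (e : β ≃ α) (P : α → Prop) :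
    Nat.card {σ : Perm α // FixedPointFreeOn P σ} =
      Nat.card {τ : Perm β // FixedPointFreeOn (P ∘ e) τ} := by
  refine Nat.card_congr (e.symm.permCongr.subtypeEquiv fun σ => ?_)
  simp only [FixedPointFreeOn, e.forall_congr_right.symm, Function.comp_apply, permCongr_apply,
    symm_symm, ne_eq, symm_apply_eq]

end Equiv.Perm

open Equiv Equiv.Perm

theorem c_zero_eq_card_fixedPointFreeOn (n k : ℕ) :
    c n k 0 =
      Nat.card {σ : Perm (Fin n) // FixedPointFreeOn (fun i : Fin n => (i : ℕ) < k) σ} := by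
  refine Nat.card_congr (subtypeEquivRight fun σ => ?_)
  simp only [Finset.card_eq_zero, Finset.filter_eq_empty_iff, Finset.mem_univ, true_imp_iff,
    not_and, FixedPointFreeOn]

theorem c_succ_zero_eq_add (m k : ℕ) (hk : k < m + 1) :
    c (m + 1) k 0 = c (m + 1) (k + 1) 0 + c m k 0 := by
  set a : Fin (m + 1) := ⟨k, hk⟩
  have h_lt_succ :
      (fun i : Fin (m + 1) => (i : ℕ) < k ∨ i = a) = fun i : Fin (m + 1) => (i : ℕ) < k + 1 := by
    ext i
    simp only [a, Fin.ext_iff]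
    omega
  have h_succAbove : (fun x : {x // x ≠ a} => (x : ℕ) < k) ∘ finSuccAboveEquiv a =
      fun j : Fin m => (j : ℕ) < k := by
    ext j
    simpa only [Function.comp_apply, finSuccAboveEquiv_apply, Fin.lt_def,
      Fin.val_castSucc] using a.succAbove_lt_iff_castSucc_lt j
  rw [c_zero_eq_card_fixedPointFreeOn, card_fixedPointFreeOn_eq_card_insert_add _ a, h_lt_succ,
    card_fixedPointFreeOn_and_fixed_eq_card_subtype _ (a := a) (lt_irrefl k),
    card_fixedPointFreeOn_congr (finSuccAboveEquiv a), h_succAbove,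
    ← c_zero_eq_card_fixedPointFreeOn, ← c_zero_eq_card_fixedPointFreeOn]

theorem stmt16 (n k : ℕ) (hk : k < n) :
    p n (k + 1) 0 = p n k 0 - (1 / (n : ℝ)) * p (n - 1) k 0 := by
  obtain ⟨m, rfl⟩ : ∃ m, n = m + 1 := ⟨n - 1, by omega⟩
  have hc : (c (m + 1) (k + 1) 0 : ℝ) = c (m + 1) k 0 - c m k 0 := by
    rw [c_succ_zero_eq_add m k hk]
    push_cast
    ring
  simp only [p, Nat.add_sub_cancel, hc, Nat.factorial_succ]
  field_simp
  push_cast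
  ring
end

section
/- For 0 < k < n and n ≥ 3, p(n,k+1,0)/p(n,k,0) = 1 - 1/n + (k/(n²(n-1)))·(p(n-2,k-1,0)/p(n,k,0)). -/
/-! Whether a permutation fixes none of a set `s` of points depends, up to relabelling, only on
`#s` and the size of the ambient type, so `c n k 0` counts the permutations avoiding fixed points
on any `k` of `n` points. Sorting these by whether one further point is fixed gives
`c (n + 1) k 0 = c (n + 1) (k + 1) 0 + c n k 0`; an induction on `k` built on this identity gives
`c (m + 2) (j + 1) 0 = (m + 2) c (m + 1) (j + 1) 0 + (j + 1) c m j 0`. Combined, they yield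
`n c n (k + 1) 0 = (n - 1) c n k 0 + k c (n - 2) (k - 1) 0`, which is the claim after division by
`n c n k 0`. -/

open Finset Equiv

variable {α β : Type*} [Fintype α] [DecidableEq α] [Fintype β] [DecidableEq β]

def derangementsOn (s : Finset α) : Finset (Perm α) := {σ | ∀ x ∈ s, σ x ≠ x}

@[simp]
lemma mem_derangementsOn {s : Finset α} {σ : Perm α} :
    σ ∈ derangementsOn s ↔ ∀ x ∈ s, σ x ≠ x := by
  simp [derangementsOn]

lemma card_derangementsOn_map (e : α ≃ β) (s : Finset α) :
    #(derangementsOn (s.map e.toEmbedding)) = #(derangementsOn s) := by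
  refine card_equiv (permCongr e).symm fun σ => ?_
  simp only [mem_derangementsOn, mem_map_equiv, permCongr_symm_apply, ne_eq, e.symm_apply_eq]
  rw [← e.forall_congr_right]
  simp

lemma card_derangementsOn_eq_add {s : Finset α} {a : α} (ha : a ∉ s) :
    #(derangementsOn s) =
      #(derangementsOn (insert a s)) + #(derangementsOn (s.subtype (· ≠ a))) := by
  rw [← card_filter_add_card_filter_not (s := derangementsOn s) (fun σ => σ a ≠ a)]
  congr 1
  · congr 1
    ext σ
    simp only [mem_filter, mem_derangementsOn, mem_insert, forall_eq_or_imp]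
    tauto
  · symm
    refine card_bij (fun τ _ => Perm.ofSubtype τ) (fun τ hτ => ?_)
      (fun τ _ τ' _ h => Perm.ofSubtype_injective h) (fun σ hσ => ?_)
    · simp only [mem_derangementsOn, mem_subtype, Subtype.forall] at hτ
      simp only [mem_filter, mem_derangementsOn, Perm.ofSubtype_apply_of_not_mem τ (not_not.2 rfl)]
      refine ⟨fun x hx => ?_, not_not.2 rfl⟩
      have hxa : x ≠ a := ne_of_mem_of_not_mem hx ha
      rw [Perm.ofSubtype_apply_of_mem τ hxa]
      exact fun h => hτ x hxa hx (Subtype.ext h)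
    · simp only [mem_filter, mem_derangementsOn, not_not] at hσ
      have hσa : ∀ x, σ x ≠ a ↔ x ≠ a := fun x => (σ.injective.eq_iff' hσ.2).not
      refine ⟨σ.subtypePerm hσa, ?_, Perm.ofSubtype_subtypePerm hσa fun x hx h => hx (h ▸ hσ.2)⟩
      simp only [mem_derangementsOn, mem_subtype, Subtype.forall, Perm.subtypePerm_apply]
      exact fun x _ hx h => hσ.1 x hx (congrArg Subtype.val h)

lemma c_zero_eq_card_derangementsOn (n k : ℕ) :
    c n k 0 = #(derangementsOn ({i | (i : ℕ) < k} : Finset (Fin n))) := by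
  rw [c, Nat.card_eq_fintype_card, Fintype.card_subtype]
  congr 1
  ext σ
  simp [filter_eq_empty_iff]

lemma card_derangementsOn_eq_c (s : Finset α) :
    #(derangementsOn s) = c (Fintype.card α) #s 0 := by
  set e := Fintype.equivFin α
  have hcard : #(s.map e.toEmbedding) = #({i | (i : ℕ) < #s} : Finset (Fin (Fintype.card α))) := by
    rw [Fin.card_filter_val_lt, card_map, min_eq_right (card_le_univ s)]
  obtain ⟨σ, hσ⟩ := Perm.exists_map_finset_eq _ _ hcard
  rw [c_zero_eq_card_derangementsOn, ← hσ, map_map, ← card_derangementsOn_map (e.trans σ)]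
  rfl

lemma c_zero_add_c_zero {n k : ℕ} (hk : k ≤ n) : c (n + 1) (k + 1) 0 + c n k 0 = c (n + 1) k 0 := by
  set s : Finset (Fin (n + 1)) := {i | (i : ℕ) < k}
  have hs : #s = k := by simp only [s, Fin.card_filter_val_lt]; omega
  have ha : Fin.last n ∉ s := by
    simp only [s, mem_filter, mem_univ, Fin.val_last, true_and, not_lt]; exact hk
  have h := card_derangementsOn_eq_add ha
  rw [card_derangementsOn_eq_c, card_derangementsOn_eq_c, card_derangementsOn_eq_c,
    card_insert_of_notMem ha, card_subtype,
    filter_true_of_mem fun x hx => ne_of_mem_of_not_mem hx ha, hs] at h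
  simp only [ne_eq, Fintype.card_subtype_compl, Fintype.card_unique, Fintype.card_fin,
    add_tsub_cancel_right] at h
  exact h.symm

lemma c_zero_zero (n : ℕ) : c n 0 0 = n.factorial := by
  simp [c_zero_eq_card_derangementsOn, derangementsOn, Fintype.card_perm]

lemma c_zero_pos {n : ℕ} (k : ℕ) (hn : 2 ≤ n) : 0 < c n k 0 := by
  rw [c_zero_eq_card_derangementsOn, card_pos]
  refine ⟨finRotate n, mem_derangementsOn.2 fun x _ => ?_⟩
  rw [← Perm.mem_support, support_finRotate_of_le hn]
  exact mem_univ x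

lemma c_zero_succ_succ {m j : ℕ} (hj : j ≤ m) :
    c (m + 2) (j + 1) 0 = (m + 2) * c (m + 1) (j + 1) 0 + (j + 1) * c m j 0 := by
  induction j generalizing m with
  | zero =>
    have h₁ := c_zero_add_c_zero (n := m + 1) (k := 0) (by omega)
    have h₂ := c_zero_add_c_zero (n := m) (k := 0) (by omega)
    simp only [c_zero_zero, Nat.factorial_succ] at h₁ h₂ ⊢
    zify at h₁ h₂ ⊢
    linear_combination h₁ - (m + 2) * h₂
  | succ j ih =>
    obtain ⟨t, rfl⟩ : ∃ t, m = t + 1 := ⟨m - 1, by omega⟩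
    have h₁ := c_zero_add_c_zero (n := t + 2) (k := j + 1) (by omega)
    have h₂ := c_zero_add_c_zero (n := t + 1) (k := j + 1) (by omega)
    have h₃ := c_zero_add_c_zero (n := t) (k := j) (by omega)
    have ih₁ := ih (m := t + 1) (by omega)
    have ih₂ := ih (m := t) (by omega)
    zify at h₁ h₂ h₃ ih₁ ih₂ ⊢
    linear_combination h₁ - (t + 3) * h₂ + ih₁ - ih₂ - (j + 1) * h₃

lemma mul_c_zero_succ_succ {m j : ℕ} (hj : j ≤ m) :
    (m + 2) * c (m + 2) (j + 2) 0 = (m + 1) * c (m + 2) (j + 1) 0 + (j + 1) * c m j 0 := by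
  have h := c_zero_add_c_zero (n := m + 1) (k := j + 1) (by omega)
  have t := c_zero_succ_succ hj
  zify at h t ⊢
  linear_combination (m + 2) * h + t

theorem stmt17_general (n k : ℕ) (hk0 : 0 < k) (hk : k < n) :
    p n (k + 1) 0 / p n k 0 =
      1 - 1 / (n : ℝ) +
        ((k : ℝ) / ((n : ℝ) ^ 2 * ((n : ℝ) - 1))) * (p (n - 2) (k - 1) 0 / p n k 0) := by
  obtain ⟨m, rfl⟩ : ∃ m, n = m + 2 := ⟨n - 2, by omega⟩
  obtain ⟨j, rfl⟩ : ∃ j, k = j + 1 := ⟨k - 1, by omega⟩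
  have key : ((m : ℝ) + 2) * c (m + 2) (j + 1 + 1) 0 =
      (m + 1) * c (m + 2) (j + 1) 0 + (j + 1) * c m j 0 := by
    exact_mod_cast mul_c_zero_succ_succ (by omega : j ≤ m)
  have hpos : (0 : ℝ) < c (m + 2) (j + 1) 0 := by exact_mod_cast c_zero_pos _ (by omega)
  simp only [p, Nat.add_sub_cancel, Nat.factorial_succ]
  push_cast
  rw [show (m : ℝ) + 2 - 1 = m + 1 by ring]
  field_simp
  linear_combination (m + 2) * key

theorem stmt17 (n k : ℕ) (hk0 : 0 < k) (hk : k < n) (hn : 3 ≤ n) :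
    p n (k + 1) 0 / p n k 0 =
      1 - 1 / (n : ℝ) +
        ((k : ℝ) / ((n : ℝ) ^ 2 * ((n : ℝ) - 1))) * (p (n - 2) (k - 1) 0 / p n k 0) :=
  stmt17_general n k hk0 hk
end

section
/- For 0 < k < n and n ≠ 3, f(n,k,0) < f(n,k-1,0); that is, the conditional probability that the (k+1)st point is fixed, given no fixed points among the first k points, is strictly decreasing in k. -/
/-! Write `c n k` for `c n k 0`. Splitting on whether the point `k` is fixed gives
`c (n + 1) k = c (n + 1) (k + 1) + c n k`, and with it the inequality `f n (k + 1) < f n k`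
becomes strict log-convexity of `n ↦ c n k`. Iterating the recurrence down to `c n n = D n`
expresses `c (k + t) k` as the binomial transform `∑ j, C(t, j) D (k + j)` of the derangement
numbers. These are strictly log-convex from index 2 on, and Cauchy–Schwarz carries strict
log-convexity through the binomial transform. For `k ≤ 1` the closed forms `n !` and
`(n - 1) (n - 1)!` are compared directly. -/

open Finset Equiv

theorem sq_sum_lt_sum_mul_sum {ι R : Type*} [Field R] [LinearOrder R] [IsStrictOrderedRing R]
    {s : Finset ι} (hs : s.Nonempty) {r f g : ι → R} (hf : ∀ i ∈ s, 0 < f i)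
    (h : ∀ i ∈ s, r i ^ 2 < f i * g i) :
    (∑ i ∈ s, r i) ^ 2 < (∑ i ∈ s, f i) * ∑ i ∈ s, g i :=
  calc (∑ i ∈ s, r i) ^ 2 ≤ (∑ i ∈ s, f i) * ∑ i ∈ s, r i ^ 2 / f i :=
        sum_sq_le_sum_mul_sum_of_sq_le_mul s (fun i hi => (hf i hi).le)
          (fun i hi => div_nonneg (sq_nonneg _) (hf i hi).le)
          (fun i hi => (mul_div_cancel₀ _ (hf i hi).ne').ge)
    _ < (∑ i ∈ s, f i) * ∑ i ∈ s, g i :=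
        mul_lt_mul_of_pos_left
          (sum_lt_sum_of_nonempty hs fun i hi => (div_lt_iff₀' (hf i hi)).2 (h i hi))
          (sum_pos hf hs)

def binomialTransform {R : Type*} [Semiring R] (a : ℕ → R) (t : ℕ) : R :=
  ∑ j ∈ range (t + 1), (t.choose j : R) * a j

section binomialTransform

variable {R : Type*}

theorem binomialTransform_zero [Semiring R] (a : ℕ → R) : binomialTransform a 0 = a 0 := by
  simp [binomialTransform]

theorem binomialTransform_add [Semiring R] (a b : ℕ → R) (t : ℕ) :
    binomialTransform a t + binomialTransform b t = binomialTransform (a + b) t := by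
  simp only [binomialTransform, ← sum_add_distrib, Pi.add_apply, mul_add]

theorem binomialTransform_succ [Semiring R] (a : ℕ → R) (t : ℕ) :
    binomialTransform a (t + 1) = binomialTransform (fun j => a j + a (j + 1)) t := by
  simp only [binomialTransform, mul_add, sum_add_distrib]
  exact sum_choose_succ_mul (fun i _ => a i) t

theorem binomialTransform_pos [Semiring R] [PartialOrder R] [IsOrderedRing R] {a : ℕ → R}
    (ha : ∀ j, 0 ≤ a j) {t : ℕ} (ht : 0 < a t) : 0 < binomialTransform a t :=
  calc 0 < (t.choose t : R) * a t := by simpa using ht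
    _ ≤ binomialTransform a t :=
      single_le_sum (f := fun j => (t.choose j : R) * a j)
        (fun j _ => mul_nonneg (Nat.cast_nonneg _) (ha j)) (self_mem_range_succ t)

theorem binomialTransform_sq_lt [Field R] [LinearOrder R] [IsStrictOrderedRing R] {a : ℕ → R}
    (ha : ∀ j, 0 < a j) (hlc : ∀ j, a (j + 1) ^ 2 < a j * a (j + 2)) (t : ℕ) :
    binomialTransform a (t + 1) ^ 2 < binomialTransform a t * binomialTransform a (t + 2) := by
  rw [binomialTransform_succ, binomialTransform_succ a (t + 1), binomialTransform_succ]
  refine sq_sum_lt_sum_mul_sum nonempty_range_add_one (fun j hj => ?_) fun j hj => ?_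
  all_goals have hC : (0 : R) < t.choose j := Nat.cast_pos.2 (Nat.choose_pos (by grind))
  · exact mul_pos hC (ha j)
  · have hpt : (a j + a (j + 1)) ^ 2 < a j * (a j + a (j + 1) + (a (j + 1) + a (j + 2))) := by
      nlinarith [hlc j]
    calc ((t.choose j : R) * (a j + a (j + 1))) ^ 2
        = (t.choose j : R) ^ 2 * (a j + a (j + 1)) ^ 2 := by ring
      _ < (t.choose j : R) ^ 2 * (a j * (a j + a (j + 1) + (a (j + 1) + a (j + 2)))) := by
        gcongr
      _ = _ := by ring

end binomialTransform

theorem le_numDerangements_succ : ∀ m : ℕ, m ≤ numDerangements (m + 1)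
  | 0 => Nat.zero_le _
  | 1 => le_rfl
  | m + 2 => by
    have := le_numDerangements_succ (m + 1)
    rw [numDerangements_add_two]
    nlinarith

theorem numDerangements_pos {m : ℕ} (hm : m ≠ 1) : 0 < numDerangements m := by
  match m, hm with
  | 0, _ => exact Nat.one_pos
  | m + 2, _ => exact (Nat.succ_pos m).trans_le (le_numDerangements_succ (m + 1))

theorem numDerangements_sq_lt {m : ℕ} (hm : 2 ≤ m) :
    numDerangements (m + 1) ^ 2 < numDerangements m * numDerangements (m + 2) := by
  obtain rfl | hm := hm.eq_or_lt
  · decide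
  have hx : 2 ≤ numDerangements m := by
    obtain ⟨l, rfl⟩ := Nat.exists_eq_add_of_lt hm
    exact le_numDerangements_succ _ |>.trans' (by omega)
  have hy : numDerangements (m + 1) ≤ (m + 1) * numDerangements m + 1 := by
    have hsucc := numDerangements_succ m
    have : (-1 : ℤ) ≤ (-1) ^ m := by rcases neg_one_pow_eq_or ℤ m with h | h <;> simp [h]
    zify
    linarith
  rw [numDerangements_add_two]
  nlinarith

noncomputable def numDerangementsOn (α : Type*) (P : α → Prop) : ℕ :=
  Nat.card {σ : Perm α // ∀ a, P a → σ a ≠ a}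

section numDerangementsOn

variable {α β : Type*}

theorem numDerangementsOn_congr (e : α ≃ β) (P : β → Prop) :
    numDerangementsOn α (fun a => P (e a)) = numDerangementsOn β P :=
  Nat.card_congr <| e.permCongr.subtypeEquiv fun σ => e.forall_congr fun {a} => by
    simp [permCongr_apply]

theorem numDerangementsOn_true [Finite α] :
    numDerangementsOn α (fun _ => True) = numDerangements (Nat.card α) := by
  classical
  have := Fintype.ofFinite α
  rw [Nat.card_eq_fintype_card, ← card_derangements_eq_numDerangements,
    ← Nat.card_eq_fintype_card]
  exact Nat.card_congr <| subtypeEquivRight fun σ => by simp [derangements]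

theorem numDerangementsOn_false [Finite α] :
    numDerangementsOn α (fun _ => False) = (Nat.card α).factorial := by
  rw [← Nat.card_perm]
  exact Nat.card_congr <| subtypeUnivEquiv fun σ a h => h.elim

theorem numDerangementsOn_eq_add [Finite α] (P : α → Prop) {a : α} (ha : ¬P a) :
    numDerangementsOn α P =
      numDerangementsOn α (fun x => P x ∨ x = a) +
        numDerangementsOn {x // x ≠ a} (fun x => P x) := by
  classical
  let S := {σ : Perm α // ∀ x, P x → σ x ≠ x}
  have hmoved : {σ : S // σ.1 a ≠ a} ≃ {σ : Perm α // ∀ x, P x ∨ x = a → σ x ≠ x} :=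
    (subtypeSubtypeEquivSubtypeInter _ (fun σ : Perm α => σ a ≠ a)).trans <|
      subtypeEquivRight fun σ => by simp only [or_imp, forall_and, forall_eq]
  have hfixed : {σ : S // σ.1 a = a} ≃
      {τ : Perm {x // x ≠ a} // ∀ x : {x // x ≠ a}, P x → τ x ≠ x} := by
    refine ((subtypeSubtypeEquivSubtypeInter _ (fun σ : Perm α => σ a = a)).trans ?_).trans
      ((Perm.subtypeEquivSubtypePerm (· ≠ a)).subtypeEquiv
        (q := fun σ => ∀ x, P x → σ.1 x ≠ x) ?_).symm
    · refine (subtypeEquivRight fun σ => ?_).trans (subtypeSubtypeEquivSubtypeInter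
        (fun σ : Perm α => ∀ x, ¬x ≠ a → σ x = x) fun σ => ∀ x, P x → σ x ≠ x).symm
      simp only [ne_eq, not_not, forall_eq, and_comm]
    · intro τ
      constructor
      · intro h x hx
        have hxa : x ≠ a := fun h => ha (h ▸ hx)
        rw [Perm.subtypeEquivSubtypePerm_apply_of_mem τ hxa]
        exact fun e => h ⟨x, hxa⟩ hx (Subtype.ext e)
      · intro h x hx e
        apply h x hx
        rw [Perm.subtypeEquivSubtypePerm_apply_of_mem τ x.2, e]
  rw [numDerangementsOn, numDerangementsOn, numDerangementsOn, ← Nat.card_congr hmoved,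
    ← Nat.card_congr hfixed, add_comm, ← Nat.card_sum]
  exact Nat.card_congr (sumCompl _).symm

end numDerangementsOn

open Nat

theorem c_eq_numDerangementsOn (n k : ℕ) :
    c n k 0 = numDerangementsOn (Fin n) (fun i => (i : ℕ) < k) :=
  Nat.card_congr <| subtypeEquivRight fun σ => by simp [filter_eq_empty_iff]

theorem c_eq_factorial (n : ℕ) : c n 0 0 = n ! := by
  rw [c_eq_numDerangementsOn]
  simpa using numDerangementsOn_false (α := Fin n)

theorem c_self (n : ℕ) : c n n 0 = numDerangements n := by
  rw [c_eq_numDerangementsOn]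
  simpa using numDerangementsOn_true (α := Fin n)

theorem c_succ {n k : ℕ} (hk : k ≤ n) : c (n + 1) k 0 = c (n + 1) (k + 1) 0 + c n k 0 := by
  let p : Fin (n + 1) := ⟨k, by omega⟩
  simp only [c_eq_numDerangementsOn]
  rw [numDerangementsOn_eq_add _ (a := p) (by simp [p]),
    ← numDerangementsOn_congr (finSuccAboveEquiv p)]
  congr 2
  · ext i
    simp only [p, Fin.ext_iff]
    omega
  · ext j
    exact Fin.succAbove_lt_iff_castSucc_lt p j

theorem c_succ_one (n : ℕ) : c (n + 1) 1 0 = n * n ! := by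
  have h := c_succ (Nat.zero_le n)
  rw [c_eq_factorial, c_eq_factorial, factorial_succ] at h
  rw [← Nat.add_right_cancel_iff (n := n !), ← h]
  ring

theorem c_add_eq_binomialTransform (k t : ℕ) :
    (c (k + t) k 0 : ℝ) = binomialTransform (fun j => (numDerangements (k + j) : ℝ)) t := by
  induction t generalizing k with
  | zero => simp [c_self, binomialTransform_zero]
  | succ t ih =>
    rw [← add_assoc, c_succ (by omega), Nat.add_right_comm, Nat.cast_add, ih, ih,
      binomialTransform_succ, add_comm, binomialTransform_add]
    congr 1
    funext j
    simp only [Pi.add_apply, add_assoc, add_comm 1 j]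

theorem c_pos {n k : ℕ} (hk : k ≤ n) (hn : n ≠ 1) : 0 < c n k 0 := by
  obtain ⟨t, rfl⟩ := Nat.exists_eq_add_of_le hk
  have := binomialTransform_pos (a := fun j => (numDerangements (k + j) : ℝ))
    (fun _ => Nat.cast_nonneg _) (t := t) (Nat.cast_pos.2 (numDerangements_pos hn))
  rw [← c_add_eq_binomialTransform] at this
  exact_mod_cast this

theorem factorial_succ_sq_lt (n : ℕ) : (n + 1)! ^ 2 < n ! * (n + 2)! := by
  rw [show (n + 1)! ^ 2 = (n + 1) * (n + 1) * n ! ^ 2 by rw [factorial_succ]; ring,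
    show n ! * (n + 2)! = (n + 1) * (n + 2) * n ! ^ 2 by rw [factorial_succ, factorial_succ]; ring]
  exact Nat.mul_lt_mul_of_pos_right (by nlinarith) (by positivity)

theorem c_sq_lt_mul {n k : ℕ} (hk : k ≤ n) (hn : n ≠ 1) :
    c (n + 1) k 0 ^ 2 < c n k 0 * c (n + 2) k 0 := by
  match k, n, hk, hn with
  | 0, n, _, _ => simpa only [c_eq_factorial] using factorial_succ_sq_lt n
  | 1, m + 2, _, _ =>
    simp only [c_succ_one, factorial_succ]
    have hX : 0 < (m + 1) ^ 2 * (m + 2) * m ! ^ 2 := by positivity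
    calc _ = (m + 2) ^ 3 * ((m + 1) ^ 2 * (m + 2) * m ! ^ 2) := by ring
      _ < (m + 1) * (m + 3) ^ 2 * ((m + 1) ^ 2 * (m + 2) * m ! ^ 2) :=
        Nat.mul_lt_mul_of_pos_right (by nlinarith) hX
      _ = _ := by ring
  | k + 2, n, hk, _ =>
    obtain ⟨t, rfl⟩ := Nat.exists_eq_add_of_le hk
    have := binomialTransform_sq_lt (a := fun j => (numDerangements (k + 2 + j) : ℝ))
      (fun j => Nat.cast_pos.2 (numDerangements_pos (by omega)))
      (fun j => by exact_mod_cast numDerangements_sq_lt (m := k + 2 + j) (by omega)) t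
    simp only [← c_add_eq_binomialTransform, ← add_assoc] at this
    exact_mod_cast this

theorem stmt19 (n k : ℕ) (hk0 : 0 < k) (hk : k < n) (hn : n ≠ 3) :
    f n k 0 < f n (k - 1) 0 := by
  obtain ⟨k, rfl⟩ : ∃ j, k = j + 1 := ⟨k - 1, by omega⟩
  obtain ⟨n, rfl⟩ : ∃ m, n = m + 2 := ⟨n - 2, by omega⟩
  have hlc := c_sq_lt_mul (n := n) (k := k) (by omega) (by omega)
  have h₁ := c_succ (n := n + 1) (k := k) (by omega)
  have h₂ := c_succ (n := n) (k := k) (by omega)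
  have hpos₁ := c_pos (n := n + 2) (k := k + 1) (by omega) (by omega)
  have hpos₂ := c_pos (n := n + 2) (k := k) (by omega) (by omega)
  show (c (n + 1) (k + 1) 0 : ℝ) / c (n + 2) (k + 1) 0 < c (n + 1) k 0 / c (n + 2) k 0
  rw [div_lt_div_iff₀ (by exact_mod_cast hpos₁) (by exact_mod_cast hpos₂)]
  -- by `h₁` and `h₂`, RHS - LHS equals `c n k 0 * c (n + 2) k 0 - c (n + 1) k 0 ^ 2`
  exact_mod_cast (by nlinarith :
    c (n + 1) (k + 1) 0 * c (n + 2) k 0 < c (n + 1) k 0 * c (n + 2) (k + 1) 0)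
end
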